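/- Let X_1,…,X_n be i.i.d. with law μ_X ∈ 𝒫_ac(ℝ^{d_1}) and Y_1,…,Y_n be i.i.d. with law μ_Y ∈ 𝒫_ac(ℝ^{d_2}), with the X-sample independent of the Y-sample (the null hypothesis of independence). Fix distinct points h^{d_1}_1,…,h^{d_1}_n ∈ [0,1]^{d_1} and distinct points h^{d_2}_1,…,h^{d_2}_n ∈ [0,1]^{d_2}, and let σ̂_X, σ̂_Y be measurable random permutations of {1,…,n} that are almost surely optimal assignments of the X-sample to the first grid and of the Y-sample to the second grid. Then the law of RdCov_n² equals the law of the same functional evaluated with the empirical ranks replaced by (h^{d_1}_{π_1(k)})_{k≤n} and (h^{d_2}_{π_2(k)})_{k≤n}, where π_1, π_2 are independent uniformly distributed random permutations of {1,…,n}; in particular, the distribution of RdCov_n² is the same for all such pairs (μ_X, μ_Y). -/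

import Mathlib

open MeasureTheory ProbabilityTheory Filter Topology
open scoped ENNReal NNReal Classical

noncomputable section

/-- `Euc d` is the Euclidean space `ℝ^d` with its Euclidean norm. -/
abbrev Euc (d : ℕ) : Type := EuclideanSpace ℝ (Fin d)

/-- The unit cube `[0,1]^d`. -/
def unitCube (d : ℕ) : Set (Euc d) := {x | ∀ i, x i ∈ Set.Icc (0 : ℝ) 1}

/-- A permutation `σ` is an optimal assignment of the points `x` to the points `h` if it
minimizes `σ ↦ ∑ i ‖x i − h (σ i)‖²` over all permutations. -/
def IsOptAssign {d n : ℕ} (x h : Fin n → Euc d) (σ : Equiv.Perm (Fin n)) : Prop :=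
  ∀ τ : Equiv.Perm (Fin n), ∑ i, ‖x i - h (σ i)‖ ^ 2 ≤ ∑ i, ‖x i - h (τ i)‖ ^ 2

/-- The rank distance covariance statistic `RdCov_n² = S₁ + S₂ − 2S₃`, as a function of the
vectors of empirical ranks `rX, rY`. -/
def rdcovStat {d₁ d₂ : ℕ} (n : ℕ) (rX : Fin n → Euc d₁) (rY : Fin n → Euc d₂) : ℝ :=
  (∑ k, ∑ l, ‖rX k - rX l‖ * ‖rY k - rY l‖) / (n : ℝ) ^ 2
  + ((∑ k, ∑ l, ‖rX k - rX l‖) / (n : ℝ) ^ 2) * ((∑ k, ∑ l, ‖rY k - rY l‖) / (n : ℝ) ^ 2)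
  - 2 * ((∑ k, ∑ l, ∑ m, ‖rX k - rX l‖ * ‖rY k - rY m‖) / (n : ℝ) ^ 3)

/-!
Two assignments `σ ≠ τ` of a sample `x ∈ Eⁿ` to injective grid points tie only on the
hyperplane `∑ i, ⟪h (τ i) - h (σ i), x i⟫ = 0`, which is Lebesgue-null in `Eⁿ` and hence null
for the product of absolutely continuous laws. So almost surely the optimal assignment is unique,
and `σ̂` is the index of the cell `{x | τ is the unique optimum}` containing the sample.
Permuting the coordinates of an i.i.d. sample preserves its law and permutes these cells, so each
of the `n!` cells has probability `1/n!`. Independence of the two samples makes `(σ̂_X, σ̂_Y)`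
uniform on pairs of permutations, and `RdCov_n²` is a function of that pair.
-/

open scoped RealInnerProductSpace

theorem MeasureTheory.Measure.AbsolutelyContinuous.pi_fin :
    ∀ {n : ℕ} {α : Fin n → Type*} [∀ i, MeasurableSpace (α i)] {μ ν : ∀ i, Measure (α i)}
      [∀ i, SigmaFinite (μ i)] [∀ i, SigmaFinite (ν i)],
      (∀ i, μ i ≪ ν i) → Measure.pi μ ≪ Measure.pi ν
  | 0, _, _, μ, ν, _, _, _ => by rw [Measure.pi_of_empty μ, Measure.pi_of_empty ν]
  | n + 1, α, _, μ, ν, _, _, h => by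
    have hμ := (measurePreserving_piFinSuccAbove μ 0).symm
    have hν := (measurePreserving_piFinSuccAbove ν 0).symm
    rw [← hμ.map_eq, ← hν.map_eq]
    exact ((h 0).prod (pi_fin fun j => h (Fin.succAbove 0 j))).map (MeasurableEquiv.measurable _)

theorem MeasureTheory.Measure.AbsolutelyContinuous.pi {ι : Type*} [Fintype ι] {α : ι → Type*}
    [∀ i, MeasurableSpace (α i)] {μ ν : ∀ i, Measure (α i)}
    [∀ i, SigmaFinite (μ i)] [∀ i, SigmaFinite (ν i)] (h : ∀ i, μ i ≪ ν i) :
    Measure.pi μ ≪ Measure.pi ν := by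
  let e := (Fintype.equivFin ι).symm
  rw [← Measure.pi_map_piCongrLeft e μ, ← Measure.pi_map_piCongrLeft e ν]
  exact (pi_fin fun i => h (e i)).map (MeasurableEquiv.measurable _)

open Equiv

section AssignmentCost

variable {ι E : Type*} [Fintype ι] [NormedAddCommGroup E]

def assignCost (x h : ι → E) (σ : Perm ι) : ℝ :=
  ∑ i, ‖x i - h (σ i)‖ ^ 2

def optCell (h : ι → E) (τ : Perm ι) : Set (ι → E) :=
  {x | ∀ σ, σ ≠ τ → assignCost x h τ < assignCost x h σ}

lemma assignCost_comp (x h : ι → E) (e σ : Perm ι) :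
    assignCost (x ∘ e) h σ = assignCost x h (σ * e⁻¹) := by
  simpa [assignCost, Perm.mul_apply] using Equiv.sum_comp e fun j => ‖x j - h ((σ * e⁻¹) j)‖ ^ 2

lemma comp_mem_optCell_iff (x h : ι → E) (e τ : Perm ι) :
    x ∘ e ∈ optCell h τ ↔ x ∈ optCell h (τ * e⁻¹) := by
  simp only [optCell, Set.mem_ofPred_eq, assignCost_comp]
  refine ⟨fun H σ hσ => ?_, fun H σ hσ => H _ (by simpa using hσ)⟩
  simpa using H (σ * e) (by rintro rfl; simp at hσ)

lemma eq_of_mem_optCell {h x : ι → E} {σ τ : Perm ι} (hσ : x ∈ optCell h σ)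
    (hτ : x ∈ optCell h τ) : σ = τ := by
  by_contra hne
  exact lt_asymm (hσ τ (Ne.symm hne)) (hτ σ hne)

lemma mem_optCell_of_isMin {h x : ι → E} {σ : Perm ι}
    (hties : Function.Injective (assignCost x h))
    (hmin : ∀ τ, assignCost x h σ ≤ assignCost x h τ) : x ∈ optCell h σ :=
  fun τ hτ => (hmin τ).lt_of_ne (hties.ne (Ne.symm hτ))

lemma exists_mem_optCell {h x : ι → E} (hties : Function.Injective (assignCost x h)) :
    ∃ σ, x ∈ optCell h σ := by
  obtain ⟨σ, -, hσ⟩ := Finset.exists_min_image Finset.univ (assignCost x h) Finset.univ_nonempty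
  exact ⟨σ, mem_optCell_of_isMin hties fun τ => hσ τ (Finset.mem_univ τ)⟩

variable [MeasurableSpace E] [BorelSpace E]

@[fun_prop]
lemma measurable_assignCost (h : ι → E) (σ : Perm ι) :
    Measurable fun x : ι → E => assignCost x h σ := by
  unfold assignCost
  fun_prop

lemma measurableSet_optCell (h : ι → E) (τ : Perm ι) : MeasurableSet (optCell h τ) := by
  simp only [optCell, Set.ofPred_forall]
  exact MeasurableSet.iInter fun σ => MeasurableSet.iInter fun _ =>
    measurableSet_lt (by fun_prop) (by fun_prop)

end AssignmentCost

section Ties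

variable {ι E : Type*} [Fintype ι] [NormedAddCommGroup E] [InnerProductSpace ℝ E]

lemma assignCost_sub_assignCost (x h : ι → E) (σ τ : Perm ι) :
    assignCost x h σ - assignCost x h τ = 2 * ∑ i, ⟪h (τ i) - h (σ i), x i⟫ := by
  have hgrid : ∑ i, ‖h (σ i)‖ ^ 2 = ∑ i, ‖h (τ i)‖ ^ 2 := by
    rw [Equiv.sum_comp σ fun j => ‖h j‖ ^ 2, Equiv.sum_comp τ fun j => ‖h j‖ ^ 2]
  simp only [assignCost, norm_sub_sq_real, inner_sub_right, Finset.sum_add_distrib,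
    Finset.sum_sub_distrib, ← Finset.mul_sum, real_inner_comm (x _)]
  linear_combination hgrid

variable [MeasurableSpace E] [BorelSpace E] [FiniteDimensional ℝ E]

lemma addHaar_assignCost_eq (ν : Measure (ι → E)) [ν.IsAddHaarMeasure] {h : ι → E}
    (hinj : Function.Injective h) {σ τ : Perm ι} (hne : σ ≠ τ) :
    ν {x | assignCost x h σ = assignCost x h τ} = 0 := by
  let L : (ι → E) →L[ℝ] ℝ := ∑ i, (innerSL ℝ (h (τ i) - h (σ i))).comp (.proj i)
  have hL : ∀ x, L x = ∑ i, ⟪h (τ i) - h (σ i), x i⟫ := fun x => by simp [L, inner_sub_left]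
  have hties : {x | assignCost x h σ = assignCost x h τ} = LinearMap.ker (L : (ι → E) →ₗ[ℝ] ℝ) := by
    ext x
    simp [← sub_eq_zero (a := assignCost x h σ), assignCost_sub_assignCost, hL]
  obtain ⟨i₀, hi₀⟩ : ∃ i, σ i ≠ τ i := not_forall.1 fun h => hne (Equiv.ext h)
  have hw : h (τ i₀) - h (σ i₀) ≠ 0 := sub_ne_zero.2 fun e => hi₀ (hinj e).symm
  have hker : LinearMap.ker (L : (ι → E) →ₗ[ℝ] ℝ) ≠ ⊤ := by
    intro htop
    have hLw : L (Pi.single i₀ (h (τ i₀) - h (σ i₀))) = 0 :=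
      LinearMap.mem_ker.1 (htop ▸ Submodule.mem_top)
    simp [hL, Pi.single_apply, apply_ite, hw] at hLw
  rw [hties]
  exact Measure.addHaar_submodule ν _ hker

lemma ae_injective_assignCost {μ ν : Measure E} [SigmaFinite μ] [ν.IsAddHaarMeasure]
    (hac : μ ≪ ν) {h : ι → E} (hinj : Function.Injective h) :
    ∀ᵐ x ∂Measure.pi fun _ : ι => μ, Function.Injective (assignCost x h) := by
  simp only [Function.Injective, ae_all_iff]
  intro σ τ
  by_cases hne : σ = τ
  · exact ae_of_all _ fun _ _ => hne
  have hnull := (Measure.AbsolutelyContinuous.pi fun _ : ι => hac)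
    (addHaar_assignCost_eq _ hinj hne)
  filter_upwards [measure_eq_zero_iff_ae_notMem.1 hnull] with x hx heq using absurd heq hx

end Ties

section CellMeasure

variable {ι E : Type*} [Fintype ι] [NormedAddCommGroup E] [MeasurableSpace E] [BorelSpace E]

lemma pi_optCell_eq (μ : Measure E) [SigmaFinite μ] (h : ι → E) (τ ρ : Perm ι) :
    Measure.pi (fun _ : ι => μ) (optCell h τ) = Measure.pi (fun _ : ι => μ) (optCell h ρ) := by
  let e : Perm ι := τ⁻¹ * ρ
  have hpre : MeasurableEquiv.piCongrLeft (fun _ => E) e ⁻¹' optCell h τ = optCell h ρ := by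
    ext x
    have hx : MeasurableEquiv.piCongrLeft (fun _ => E) e x = x ∘ ⇑e⁻¹ := by
      ext i
      simp [MeasurableEquiv.coe_piCongrLeft, Equiv.piCongrLeft_apply, Perm.inv_def]
    rw [Set.mem_preimage, hx, comp_mem_optCell_iff, inv_inv, mul_inv_cancel_left]
  rw [← hpre, (measurePreserving_piCongrLeft (fun _ => μ) e).measure_preimage
    (measurableSet_optCell h τ).nullMeasurableSet]

variable [InnerProductSpace ℝ E] [FiniteDimensional ℝ E]

lemma pi_optCell {μ ν : Measure E} [IsProbabilityMeasure μ] [ν.IsAddHaarMeasure] (hac : μ ≪ ν)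
    {h : ι → E} (hinj : Function.Injective h) (τ : Perm ι) :
    Measure.pi (fun _ : ι => μ) (optCell h τ) = ((Fintype.card ι).factorial : ℝ≥0∞)⁻¹ := by
  set m := Measure.pi fun _ : ι => μ
  have hcover : m (⋃ σ, optCell h σ) = 1 := by
    rw [← measure_univ (μ := m)]
    refine measure_congr (eventuallyEq_univ.2 ?_)
    filter_upwards [ae_injective_assignCost hac hinj] with x hx
    exact Set.mem_iUnion.2 (exists_mem_optCell hx)
  have hdisj : Pairwise (Function.onFun Disjoint (optCell h)) := fun σ ρ hne =>
    Set.disjoint_left.2 fun x hσ hρ => hne (eq_of_mem_optCell hσ hρ)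
  rw [measure_iUnion hdisj (measurableSet_optCell h), tsum_fintype,
    Finset.sum_congr rfl fun σ _ => pi_optCell_eq μ h σ τ] at hcover
  simp only [Finset.sum_const, Finset.card_univ, Fintype.card_perm, nsmul_eq_mul] at hcover
  exact ENNReal.eq_inv_of_mul_eq_one_left (by rwa [mul_comm])

end CellMeasure

section OptimalAssignment

variable {Ω ι E F : Type*} [MeasurableSpace Ω] [Fintype ι]
  [NormedAddCommGroup E] [InnerProductSpace ℝ E] [FiniteDimensional ℝ E]
  [MeasurableSpace E] [BorelSpace E]
  [NormedAddCommGroup F] [InnerProductSpace ℝ F] [FiniteDimensional ℝ F]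
  [MeasurableSpace F] [BorelSpace F]

lemma ae_mem_optCell {P : Measure Ω} {μ ν : Measure E} [SigmaFinite μ] [ν.IsAddHaarMeasure]
    (hac : μ ≪ ν) {h : ι → E} (hinj : Function.Injective h) {X : Ω → ι → E}
    (hX : Measure.QuasiMeasurePreserving X P (Measure.pi fun _ => μ)) {σ : Ω → Perm ι}
    (hopt : ∀ᵐ ω ∂P, ∀ τ, assignCost (X ω) h (σ ω) ≤ assignCost (X ω) h τ) :
    ∀ᵐ ω ∂P, X ω ∈ optCell h (σ ω) := by
  filter_upwards [hX.ae (ae_injective_assignCost hac hinj), hopt] with ω hties hmin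
  exact mem_optCell_of_isMin hties hmin

theorem measure_optAssign_pair_mem {P : Measure Ω} {μ ν : Measure E} {μ' ν' : Measure F}
    [IsProbabilityMeasure μ] [ν.IsAddHaarMeasure] [IsProbabilityMeasure μ'] [ν'.IsAddHaarMeasure]
    (hac : μ ≪ ν) (hac' : μ' ≪ ν') {g : ι → E} {g' : ι → F}
    (hinj : Function.Injective g) (hinj' : Function.Injective g')
    {X : Ω → ι → E} {Y : Ω → ι → F}
    (hXY : MeasurePreserving (fun ω => (X ω, Y ω)) P
      ((Measure.pi fun _ => μ).prod (Measure.pi fun _ => μ')))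
    {σ σ' : Ω → Perm ι}
    (hopt : ∀ᵐ ω ∂P, ∀ τ, assignCost (X ω) g (σ ω) ≤ assignCost (X ω) g τ)
    (hopt' : ∀ᵐ ω ∂P, ∀ τ, assignCost (Y ω) g' (σ' ω) ≤ assignCost (Y ω) g' τ)
    (S : Finset (Perm ι × Perm ι)) :
    P {ω | (σ ω, σ' ω) ∈ S}
      = S.card / (((Fintype.card ι).factorial : ℝ≥0∞) * (Fintype.card ι).factorial) := by
  have hX := ae_mem_optCell hac hinj
    (Measure.quasiMeasurePreserving_fst.comp hXY.quasiMeasurePreserving) hopt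
  have hY := ae_mem_optCell hac' hinj'
    (Measure.quasiMeasurePreserving_snd.comp hXY.quasiMeasurePreserving) hopt'
  have hevent : {ω | (σ ω, σ' ω) ∈ S}
      =ᵐ[P] (fun ω => (X ω, Y ω)) ⁻¹' ⋃ p ∈ S, optCell g p.1 ×ˢ optCell g' p.2 := by
    refine eventuallyEq_set.2 ?_
    filter_upwards [hX, hY] with ω hx hy
    simp only [Set.mem_preimage, Set.mem_iUnion, Set.mem_prod, exists_prop]
    refine ⟨fun hS => ⟨_, hS, hx, hy⟩, ?_⟩
    rintro ⟨p, hp, hpx, hpy⟩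
    rwa [eq_of_mem_optCell hx hpx, eq_of_mem_optCell hy hpy]
  have hdisj : Set.PairwiseDisjoint (S : Set (Perm ι × Perm ι))
      fun p => optCell g p.1 ×ˢ optCell g' p.2 := by
    intro p _ q _ hpq
    refine Set.disjoint_left.2 fun z hp hq => hpq (Prod.ext ?_ ?_)
    · exact eq_of_mem_optCell hp.1 hq.1
    · exact eq_of_mem_optCell hp.2 hq.2
  have hmeas : ∀ p ∈ S, MeasurableSet (optCell g p.1 ×ˢ optCell g' p.2) :=
    fun p _ => (measurableSet_optCell g p.1).prod (measurableSet_optCell g' p.2)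
  rw [measure_congr hevent,
    hXY.measure_preimage (Finset.measurableSet_biUnion S hmeas).nullMeasurableSet,
    measure_biUnion_finset hdisj hmeas]
  simp only [Measure.prod_prod, pi_optCell hac hinj, pi_optCell hac' hinj', Finset.sum_const,
    nsmul_eq_mul]
  rw [div_eq_mul_inv, ENNReal.mul_inv (by simp) (by simp)]

end OptimalAssignment

theorem ProbabilityTheory.iIndepFun.measurePreserving_pi_prod {Ω ι α β : Type*}
    [MeasurableSpace Ω] [Fintype ι] [MeasurableSpace α] [MeasurableSpace β] {P : Measure Ω}
    {μ : Measure α} {ν : Measure β} [SigmaFinite μ] [SigmaFinite ν]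
    {X : ι → Ω → α} {Y : ι → Ω → β} (hX : ∀ i, Measurable (X i)) (hY : ∀ i, Measurable (Y i))
    (hind : iIndepFun (fun i ω => (X i ω, Y i ω)) P)
    (hlaw : ∀ i, P.map (fun ω => (X i ω, Y i ω)) = μ.prod ν) :
    MeasurePreserving (fun ω => (fun i => X i ω, fun i => Y i ω)) P
      ((Measure.pi fun _ : ι => μ).prod (Measure.pi fun _ : ι => ν)) := by
  have hXY : ∀ i, Measurable fun ω => (X i ω, Y i ω) := fun i => (hX i).prodMk (hY i)
  have hpi := hind.map_fun_eq_pi_map fun i => (hXY i).aemeasurable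
  simp only [hlaw] at hpi
  have hmp : MeasurePreserving (fun ω i => (X i ω, Y i ω)) P (Measure.pi fun _ : ι => μ.prod ν) :=
    ⟨measurable_pi_lambda _ hXY, hpi⟩
  exact (measurePreserving_arrowProdEquivProdArrow α β ι _ _).comp hmp

theorem stmt8_general
    {d₁ d₂ n : ℕ} {Ω : Type*} [MeasurableSpace Ω] (P : Measure Ω)
    (μX : Measure (Euc d₁)) (μY : Measure (Euc d₂))
    [IsProbabilityMeasure μX] [IsProbabilityMeasure μY]
    (hacX : μX ≪ volume) (hacY : μY ≪ volume)
    (X : Fin n → Ω → Euc d₁) (Y : Fin n → Ω → Euc d₂)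
    (hXmeas : ∀ i, Measurable (X i)) (hYmeas : ∀ i, Measurable (Y i))
    (hiid : iIndepFun (fun i ω => (X i ω, Y i ω)) P)
    (hlaw : ∀ i, Measure.map (fun ω => (X i ω, Y i ω)) P = μX.prod μY)
    (hX : Fin n → Euc d₁) (hY : Fin n → Euc d₂)
    (hXinj : Function.Injective hX) (hYinj : Function.Injective hY)
    (σX σY : Ω → Equiv.Perm (Fin n))
    (hoptX : ∀ᵐ ω ∂P, IsOptAssign (fun i => X i ω) hX (σX ω))
    (hoptY : ∀ᵐ ω ∂P, IsOptAssign (fun i => Y i ω) hY (σY ω)) :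
    ∀ B : Set ℝ, MeasurableSet B →
      P {ω | rdcovStat n (fun k => hX (σX ω k)) (fun k => hY (σY ω k)) ∈ B}
        = ((Finset.univ.filter
              (fun p : Equiv.Perm (Fin n) × Equiv.Perm (Fin n) =>
                rdcovStat n (fun k => hX (p.1 k)) (fun k => hY (p.2 k)) ∈ B)).card : ℝ≥0∞)
          / ((Nat.factorial n : ℝ≥0∞) * (Nat.factorial n : ℝ≥0∞)) := by
  intro B _
  simpa using measure_optAssign_pair_mem hacX hacY hXinj hYinj
    (hiid.measurePreserving_pi_prod hXmeas hYmeas hlaw) hoptX hoptY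
    (Finset.univ.filter fun p : Perm (Fin n) × Perm (Fin n) =>
      rdcovStat n (fun k => hX (p.1 k)) (fun k => hY (p.2 k)) ∈ B)

/-- Distribution-freeness of `RdCov_n²` under the null hypothesis of independence: its law
coincides with the law of the same functional with the empirical ranks replaced by two
independent uniformly random orderings of the two grids; in particular it does not depend on
`(μ_X, μ_Y)`. -/
theorem stmt8
    {d₁ d₂ n : ℕ} {Ω : Type*} [MeasurableSpace Ω] (P : Measure Ω) [IsProbabilityMeasure P]
    (μX : Measure (Euc d₁)) (μY : Measure (Euc d₂))
    [IsProbabilityMeasure μX] [IsProbabilityMeasure μY]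
    (hacX : μX ≪ volume) (hacY : μY ≪ volume)
    (X : Fin n → Ω → Euc d₁) (Y : Fin n → Ω → Euc d₂)
    (hXmeas : ∀ i, Measurable (X i)) (hYmeas : ∀ i, Measurable (Y i))
    (hiid : iIndepFun (fun i ω => (X i ω, Y i ω)) P)
    (hlaw : ∀ i, Measure.map (fun ω => (X i ω, Y i ω)) P = μX.prod μY)
    (hX : Fin n → Euc d₁) (hY : Fin n → Euc d₂)
    (hXcube : ∀ i, hX i ∈ unitCube d₁) (hYcube : ∀ i, hY i ∈ unitCube d₂)
    (hXinj : Function.Injective hX) (hYinj : Function.Injective hY)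
    (σX σY : Ω → Equiv.Perm (Fin n))
    (hσXmeas : ∀ σ₀ : Equiv.Perm (Fin n), MeasurableSet {ω | σX ω = σ₀})
    (hσYmeas : ∀ σ₀ : Equiv.Perm (Fin n), MeasurableSet {ω | σY ω = σ₀})
    (hoptX : ∀ᵐ ω ∂P, IsOptAssign (fun i => X i ω) hX (σX ω))
    (hoptY : ∀ᵐ ω ∂P, IsOptAssign (fun i => Y i ω) hY (σY ω)) :
    ∀ B : Set ℝ, MeasurableSet B →
      P {ω | rdcovStat n (fun k => hX (σX ω k)) (fun k => hY (σY ω k)) ∈ B}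
        = ((Finset.univ.filter
              (fun p : Equiv.Perm (Fin n) × Equiv.Perm (Fin n) =>
                rdcovStat n (fun k => hX (p.1 k)) (fun k => hY (p.2 k)) ∈ B)).card : ℝ≥0∞)
          / ((Nat.factorial n : ℝ≥0∞) * (Nat.factorial n : ℝ≥0∞)) :=
  stmt8_general P μX μY hacX hacY X Y hXmeas hYmeas hiid hlaw hX hY hXinj hYinj σX σY hoptX hoptY

end
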